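/- Let E be a Euclidean space of dimension n and ξ ∈ E* nonzero. Then the space of symmetric m-tensors decomposes orthogonally as ⊗^m_S E* = ran(j_ξ) ⊕ ker(ι_{ξ^♯}), where j_ξ(u) = S(ξ ⊗ u) is symmetrized tensor multiplication by ξ and ι_{ξ^♯} is contraction with the dual vector ξ^♯. -/

import Mathlib

open scoped RealInnerProductSpace

noncomputable section

abbrev E (n : ℕ) := EuclideanSpace ℝ (Fin n)

def IsSymMultilinear {n m : ℕ} (T : (Fin m → E n) → ℝ) : Prop :=
  (∀ (i : Fin m) (v : Fin m → E n) (x y : E n),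
    T (Function.update v i (x + y)) = T (Function.update v i x) + T (Function.update v i y)) ∧
  (∀ (i : Fin m) (v : Fin m → E n) (c : ℝ) (x : E n),
    T (Function.update v i (c • x)) = c * T (Function.update v i x)) ∧
  (∀ (σ : Equiv.Perm (Fin m)) (v : Fin m → E n), T (v ∘ σ) = T v)

/-- `T ∈ ker ι_{w}`: the contraction of `T` with `w` vanishes. -/
def contrZero {n m : ℕ} (w : E n) (T : (Fin m → E n) → ℝ) : Prop :=
  ∀ (j : Fin m) (v : Fin m → E n), v j = w → T v = 0

/-- `j_ξ u = S(ξ ⊗ u)`: symmetrized tensor multiplication of the symmetric `m`-tensor `u`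
by the covector dual to `w`. -/
def jApp {n m : ℕ} (w : E n) (u : (Fin m → E n) → ℝ) : (Fin (m + 1) → E n) → ℝ :=
  fun v => (∑ i : Fin (m + 1), ⟪w, v i⟫ * u (fun j => v (i.succAbove j))) / (m + 1)

/-- The inner product on `m`-tensors induced by the Euclidean structure
(sum of products of coefficients over the standard orthonormal basis). -/
def tInner {n m : ℕ} (S T : (Fin m → E n) → ℝ) : ℝ :=
  ∑ K : Fin m → Fin n,
    S (fun j => EuclideanSpace.single (K j) (1 : ℝ)) *
      T (fun j => EuclideanSpace.single (K j) (1 : ℝ))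

/-!
Symmetric tensors are encoded by their coefficient arrays on the standard basis, on which `tInner`
is the Euclidean inner product. In coordinates `j_ξ` and the contraction `ι_{ξ^♯}` are adjoint on
symmetric arrays: in `⟪j_ξ c, d⟫` each of the `m + 1` slots contributes `⟪c, ι_{ξ^♯} d⟫` once
the slot is moved to the front by symmetry of `d`, and `j_ξ` averages over the slots. Hence inside
the symmetric arrays `ker ι_{ξ^♯}` is the orthogonal complement of `ran j_ξ`: projecting onto
`ran j_ξ` gives the decomposition, and `‖j_ξ c‖² = ⟪c, ι_{ξ^♯} (j_ξ c)⟫` gives its uniqueness.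
-/

theorem EuclideanSpace.real_inner_eq_sum {ι : Type*} [Fintype ι] (a b : EuclideanSpace ℝ ι) :
    ⟪a, b⟫ = ∑ i, a i * b i := by
  simp [PiLp.inner_apply, mul_comm]

theorem Fin.sum_eq_sum_insertNth {α β : Type*} [Fintype α] [AddCommMonoid β] {m : ℕ}
    (i : Fin (m + 1)) (f : (Fin (m + 1) → α) → β) :
    ∑ K, f K = ∑ k, ∑ K', f (i.insertNth k K') := by
  rw [← Fintype.sum_prod_type']
  exact (Fintype.sum_equiv (Fin.insertNthEquiv (fun _ => α) i) _ _ fun _ => rfl).symm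

theorem Fin.exists_perm_comp_succAbove {m : ℕ} (σ : Equiv.Perm (Fin (m + 1)))
    (i : Fin (m + 1)) : ∃ τ : Equiv.Perm (Fin m), σ ∘ i.succAbove = (σ i).succAbove ∘ τ := by
  have hne (j : Fin m) : σ (i.succAbove j) ≠ σ i := σ.injective.ne (Fin.succAbove_ne i j)
  choose τ hτ using fun j => Fin.exists_succAbove_eq (hne j)
  have hinj : Function.Injective τ := fun a b hab =>
    Fin.succAbove_right_injective (σ.injective (by rw [← hτ a, ← hτ b, hab]))
  exact ⟨Equiv.ofBijective τ hinj.bijective_of_finite, funext fun j => (hτ j).symm⟩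

section AdjointDecomposition

variable {F G : Type*} [NormedAddCommGroup F] [InnerProductSpace ℝ F]
  [NormedAddCommGroup G] [InnerProductSpace ℝ G]
  {J : F →ₗ[ℝ] G} {I : G →ₗ[ℝ] F} {S : Submodule ℝ F} {S' : Submodule ℝ G}

theorem exists_apply_sub_eq_zero_of_adjoint [FiniteDimensional ℝ G]
    (hJ : ∀ c ∈ S, J c ∈ S') (hI : ∀ d ∈ S', I d ∈ S)
    (hadj : ∀ c, ∀ d ∈ S', ⟪J c, d⟫ = ⟪c, I d⟫) {t : G} (ht : t ∈ S') :
    ∃ c ∈ S, I (t - J c) = 0 := by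
  obtain ⟨_, ⟨c, hc, rfl⟩, z, hz, rfl⟩ :=
    Submodule.exists_add_mem_mem_orthogonal (K := S.map J) t
  refine ⟨c, hc, ?_⟩
  have hzS' : z ∈ S' := by simpa using S'.sub_mem ht (hJ c hc)
  rw [add_sub_cancel_left, ← inner_self_eq_zero (𝕜 := ℝ), ← hadj _ _ hzS']
  exact hz _ (Submodule.mem_map_of_mem (hI z hzS'))

theorem apply_eq_of_add_eq_add_of_adjoint (hadj : ∀ c, ∀ d ∈ S', ⟪J c, d⟫ = ⟪c, I d⟫)
    {c₁ c₂ : F} {z₁ z₂ : G} (hz₁ : z₁ ∈ S') (hz₂ : z₂ ∈ S') (hI₁ : I z₁ = 0) (hI₂ : I z₂ = 0)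
    (h : J c₁ + z₁ = J c₂ + z₂) : J c₁ = J c₂ := by
  have hx : J (c₁ - c₂) = z₂ - z₁ := by rw [map_sub, sub_eq_sub_iff_add_eq_add, h, add_comm]
  rw [← sub_eq_zero, ← map_sub, ← inner_self_eq_zero (𝕜 := ℝ),
    hadj _ _ (hx ▸ S'.sub_mem hz₂ hz₁), hx, map_sub, hI₁, hI₂, sub_zero, inner_zero_right]

end AdjointDecomposition

theorem IsSymMultilinear.exists_multilinearMap {n m : ℕ} {T : (Fin m → E n) → ℝ}
    (hT : IsSymMultilinear T) : ∃ M : MultilinearMap ℝ (fun _ : Fin m => E n) ℝ, ⇑M = T := by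
  refine ⟨{ toFun := T, map_update_add' := ?_, map_update_smul' := ?_ }, rfl⟩
  · intro _ v i x y
    convert hT.1 i v x y
  · intro _ v i c x
    rw [smul_eq_mul]
    convert hT.2.1 i v c x

namespace SymTensor

variable {n m : ℕ}

abbrev Coeffs (n m : ℕ) : Type := EuclideanSpace ℝ (Fin m → Fin n)

def basisTuple (K : Fin m → Fin n) : Fin m → E n := fun j => EuclideanSpace.single (K j) 1

def coeffs : ((Fin m → E n) → ℝ) →ₗ[ℝ] Coeffs n m where
  toFun T := WithLp.toLp 2 fun K => T (basisTuple K)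
  map_add' _ _ := rfl
  map_smul' _ _ := rfl

theorem coeffs_apply (T : (Fin m → E n) → ℝ) (K : Fin m → Fin n) :
    coeffs T K = T (basisTuple K) := rfl

def monomial (K : Fin m → Fin n) : MultilinearMap ℝ (fun _ : Fin m => E n) ℝ :=
  (MultilinearMap.mkPiAlgebra ℝ (Fin m) ℝ).compLinearMap fun j =>
    (EuclideanSpace.proj (K j) : E n →L[ℝ] ℝ).toLinearMap

def ofCoeffs : Coeffs n m →ₗ[ℝ] MultilinearMap ℝ (fun _ : Fin m => E n) ℝ where
  toFun c := ∑ K, c K • monomial K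
  map_add' _ _ := by simp [add_smul, Finset.sum_add_distrib]
  map_smul' _ _ := by simp [Finset.smul_sum, smul_smul]

theorem ofCoeffs_apply (c : Coeffs n m) (v : Fin m → E n) :
    ofCoeffs c v = ∑ K, c K * ∏ j, v j (K j) := by
  simp [ofCoeffs, monomial]

theorem ofCoeffs_basisTuple (c : Coeffs n m) (K : Fin m → Fin n) :
    ofCoeffs c (basisTuple K) = c K := by
  rw [ofCoeffs_apply, Finset.sum_eq_single K]
  · simp [basisTuple]
  · intro L _ hL
    obtain ⟨j, hj⟩ := Function.ne_iff.mp hL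
    rw [Finset.prod_eq_zero (Finset.mem_univ j) (by simp [basisTuple, hj]), mul_zero]
  · simp

theorem coeffs_ofCoeffs (c : Coeffs n m) : coeffs (ofCoeffs c) = c := by
  ext K
  exact ofCoeffs_basisTuple c K

theorem ofCoeffs_coeffs (M : MultilinearMap ℝ (fun _ : Fin m => E n) ℝ) :
    ofCoeffs (coeffs M) = M :=
  Module.Basis.ext_multilinear (fun _ => (EuclideanSpace.basisFun (Fin n) ℝ).toBasis) fun K => by
    simp only [OrthonormalBasis.coe_toBasis, EuclideanSpace.basisFun_apply]
    exact ofCoeffs_basisTuple _ K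

def symCoeffs (n m : ℕ) : Submodule ℝ (Coeffs n m) where
  carrier := {c | ∀ (σ : Equiv.Perm (Fin m)) K, c (K ∘ σ) = c K}
  add_mem' ha hb σ K := by simp [ha σ K, hb σ K]
  zero_mem' _ _ := rfl
  smul_mem' r _ ha σ K := by simp [ha σ K]

theorem coeffs_mem_symCoeffs {T : (Fin m → E n) → ℝ} (hT : IsSymMultilinear T) :
    coeffs T ∈ symCoeffs n m :=
  fun σ K => hT.2.2 σ (basisTuple K)

theorem isSymMultilinear_ofCoeffs {c : Coeffs n m} (hc : c ∈ symCoeffs n m) :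
    IsSymMultilinear (ofCoeffs c) := by
  refine ⟨fun i v => (ofCoeffs c).map_update_add v i,
    fun i v => (ofCoeffs c).map_update_smul v i, fun σ v => ?_⟩
  simp only [ofCoeffs_apply]
  refine Fintype.sum_equiv (Equiv.arrowCongr σ (Equiv.refl _)) _ _ fun K => ?_
  have he : Equiv.arrowCongr σ (Equiv.refl (Fin n)) K = K ∘ σ.symm := rfl
  rw [he, hc σ.symm K, ← Equiv.prod_comp σ fun j => v j ((K ∘ σ.symm) j)]
  simp

theorem apply_insertNth_of_mem_symCoeffs {d : Coeffs n (m + 1)} (hd : d ∈ symCoeffs n (m + 1))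
    (i : Fin (m + 1)) (k : Fin n) (K : Fin m → Fin n) :
    d (i.insertNth k K) = d (Fin.cons k K) := by
  rw [← Fin.insertNth_comp_cycleRange_symm, hd]

def symMul (w : E n) : Coeffs n m →ₗ[ℝ] Coeffs n (m + 1) where
  toFun c := WithLp.toLp 2 fun K => (∑ i, w (K i) * c (K ∘ i.succAbove)) / (m + 1)
  map_add' c c' := by ext K; simp [mul_add, Finset.sum_add_distrib, add_div]
  map_smul' r c := by ext K; simp [mul_left_comm, ← Finset.mul_sum, mul_div_assoc]

theorem symMul_apply (w : E n) (c : Coeffs n m) (K : Fin (m + 1) → Fin n) :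
    symMul w c K = (∑ i, w (K i) * c (K ∘ i.succAbove)) / (m + 1) := rfl

def contract (w : E n) : Coeffs n (m + 1) →ₗ[ℝ] Coeffs n m where
  toFun d := WithLp.toLp 2 fun K => ∑ k, w k * d (Fin.cons k K)
  map_add' d d' := by ext K; simp [mul_add, Finset.sum_add_distrib]
  map_smul' r d := by ext K; simp [Finset.mul_sum, mul_left_comm]

theorem contract_apply (w : E n) (d : Coeffs n (m + 1)) (K : Fin m → Fin n) :
    contract w d K = ∑ k, w k * d (Fin.cons k K) := rfl

theorem symMul_mem_symCoeffs (w : E n) {c : Coeffs n m} (hc : c ∈ symCoeffs n m) :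
    symMul w c ∈ symCoeffs n (m + 1) := by
  intro σ K
  simp only [symMul_apply]
  congr 1
  refine Fintype.sum_equiv σ _ _ fun i => ?_
  obtain ⟨τ, hτ⟩ := Fin.exists_perm_comp_succAbove σ i
  rw [Function.comp_apply, Function.comp_assoc, hτ, ← Function.comp_assoc, hc]

theorem contract_mem_symCoeffs (w : E n) {d : Coeffs n (m + 1)}
    (hd : d ∈ symCoeffs n (m + 1)) : contract w d ∈ symCoeffs n m := by
  intro σ K
  simp only [contract_apply]
  refine Finset.sum_congr rfl fun k _ => ?_
  have hcons : (Fin.cons k (K ∘ σ) : Fin (m + 1) → Fin n) =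
      Fin.cons k K ∘ Equiv.Perm.decomposeFin.symm (0, σ) := by
    funext j
    cases j using Fin.cases <;> simp
  rw [hcons, hd]

theorem inner_symMul (w : E n) (c : Coeffs n m) {d : Coeffs n (m + 1)}
    (hd : d ∈ symCoeffs n (m + 1)) : ⟪symMul w c, d⟫ = ⟪c, contract w d⟫ := by
  have hslot (i : Fin (m + 1)) :
      ∑ K, w (K i) * c (K ∘ i.succAbove) * d K = ∑ K', c K' * contract w d K' := by
    rw [Fin.sum_eq_sum_insertNth i, Finset.sum_comm]
    refine Finset.sum_congr rfl fun K' _ => ?_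
    simp only [Fin.insertNth_apply_same, Fin.insertNth_comp_succAbove,
      apply_insertNth_of_mem_symCoeffs hd, contract_apply, Finset.mul_sum]
    exact Finset.sum_congr rfl fun k _ => by ring
  calc ⟪symMul w c, d⟫
      = ∑ i, (∑ K, w (K i) * c (K ∘ i.succAbove) * d K) / (m + 1) := by
        simp only [EuclideanSpace.real_inner_eq_sum, symMul_apply, div_mul_eq_mul_div,
          Finset.sum_mul, ← Finset.sum_div]
        rw [Finset.sum_comm]
    _ = ⟪c, contract w d⟫ := by
        simp only [hslot, Finset.sum_const, Finset.card_univ, Fintype.card_fin, nsmul_eq_mul,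
          EuclideanSpace.real_inner_eq_sum]
        push_cast
        field_simp

theorem tInner_eq_inner (S T : (Fin m → E n) → ℝ) :
    tInner S T = ⟪coeffs S, coeffs T⟫ := by
  rw [EuclideanSpace.real_inner_eq_sum]
  rfl

theorem coeffs_jApp (w : E n) (u : (Fin m → E n) → ℝ) :
    coeffs (jApp w u) = symMul w (coeffs u) := by
  ext K
  simp only [coeffs_apply, jApp, basisTuple, EuclideanSpace.inner_single_right,
    Real.ringHom_apply, one_mul, symMul_apply]
  rfl

theorem jApp_ofCoeffs (w : E n) (c : Coeffs n m) :
    jApp w (ofCoeffs c) = ofCoeffs (symMul w c) := by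
  funext v
  have hslot (i : Fin (m + 1)) : ⟪w, v i⟫ * ofCoeffs c (fun j => v (i.succAbove j)) =
      ∑ K, w (K i) * c (K ∘ i.succAbove) * ∏ j, v j (K j) := by
    rw [ofCoeffs_apply, EuclideanSpace.real_inner_eq_sum, Finset.sum_mul_sum,
      Fin.sum_eq_sum_insertNth i]
    refine Finset.sum_congr rfl fun k _ => Finset.sum_congr rfl fun K' _ => ?_
    simp only [Fin.insertNth_apply_same, Fin.insertNth_comp_succAbove,
      Fin.prod_univ_succAbove _ i, Fin.insertNth_apply_succAbove]
    ring
  simp only [jApp, hslot]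
  rw [ofCoeffs_apply]
  simp only [symMul_apply, div_mul_eq_mul_div, Finset.sum_mul, ← Finset.sum_div]
  rw [Finset.sum_comm]

theorem basisTuple_cons (k : Fin n) (K : Fin m → Fin n) :
    basisTuple (Fin.cons k K) = Fin.cons (EuclideanSpace.single k 1) (basisTuple K) := by
  funext j
  cases j using Fin.cases <;> rfl

theorem contract_coeffs_eq_zero {w : E n}
    (M : MultilinearMap ℝ (fun _ : Fin (m + 1) => E n) ℝ) (hM : contrZero w M) :
    contract w (coeffs M) = 0 := by
  ext K
  have hw : ∑ k, w k • EuclideanSpace.single k (1 : ℝ) = w := by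
    simpa using (EuclideanSpace.basisFun (Fin n) ℝ).sum_repr w
  calc contract w (coeffs M) K
      = M.curryLeft (∑ k, w k • EuclideanSpace.single k 1) (basisTuple K) := by
        simp [contract_apply, coeffs_apply, basisTuple_cons, MultilinearMap.curryLeft_apply]
    _ = 0 := by
        rw [hw, MultilinearMap.curryLeft_apply]
        exact hM 0 _ rfl

theorem contrZero_ofCoeffs {w : E n} {d : Coeffs n (m + 1)} (hd : d ∈ symCoeffs n (m + 1))
    (h0 : contract w d = 0) : contrZero w (ofCoeffs d) := by
  intro j v hvj
  rw [ofCoeffs_apply, Fin.sum_eq_sum_insertNth j, Finset.sum_comm]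
  refine Finset.sum_eq_zero fun K _ => ?_
  have hK : ∑ k, w k * d (Fin.cons k K) = 0 := by simp [← contract_apply, h0]
  calc _ = (∏ i, v (j.succAbove i) (K i)) * ∑ k, w k * d (Fin.cons k K) := by
        rw [Finset.mul_sum]
        refine Finset.sum_congr rfl fun k _ => ?_
        rw [Fin.prod_univ_succAbove _ j]
        simp only [Fin.insertNth_apply_same, Fin.insertNth_apply_succAbove, hvj,
          apply_insertNth_of_mem_symCoeffs hd]
        ring
    _ = 0 := by rw [hK, mul_zero]

end SymTensor

open SymTensor in
theorem xray_stmt16_general {n m : ℕ} (w : E n) :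
    (∀ (u : (Fin m → E n) → ℝ) (h : (Fin (m + 1) → E n) → ℝ),
      IsSymMultilinear u → IsSymMultilinear h → contrZero w h →
      tInner (jApp w u) h = 0) ∧
    (∀ T : (Fin (m + 1) → E n) → ℝ, IsSymMultilinear T →
      ∃ (u : (Fin m → E n) → ℝ) (h : (Fin (m + 1) → E n) → ℝ),
        IsSymMultilinear u ∧ IsSymMultilinear h ∧ contrZero w h ∧
        (∀ v, T v = jApp w u v + h v) ∧
        (∀ (u₂ : (Fin m → E n) → ℝ) (h₂ : (Fin (m + 1) → E n) → ℝ),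
          IsSymMultilinear u₂ → IsSymMultilinear h₂ → contrZero w h₂ →
          (∀ v, T v = jApp w u₂ v + h₂ v) →
          (∀ v, jApp w u₂ v = jApp w u v) ∧ h₂ = h)) := by
  have hadj : ∀ c, ∀ d ∈ symCoeffs n (m + 1), ⟪symMul w c, d⟫ = ⟪c, contract w d⟫ :=
    fun c _ hd => inner_symMul w c hd
  refine ⟨fun u h _ hh hzero => ?_, fun T hT => ?_⟩
  · obtain ⟨h, rfl⟩ := hh.exists_multilinearMap
    rw [tInner_eq_inner, coeffs_jApp, hadj _ _ (coeffs_mem_symCoeffs hh),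
      contract_coeffs_eq_zero h hzero, inner_zero_right]
  obtain ⟨T, rfl⟩ := hT.exists_multilinearMap
  obtain ⟨c, hc, hcontr⟩ := exists_apply_sub_eq_zero_of_adjoint
    (fun _ => symMul_mem_symCoeffs w) (fun _ => contract_mem_symCoeffs w) hadj
    (coeffs_mem_symCoeffs hT)
  set z := coeffs T - symMul w c
  have hz : z ∈ symCoeffs n (m + 1) :=
    sub_mem (coeffs_mem_symCoeffs hT) (symMul_mem_symCoeffs w hc)
  have hdec (v) : T v = jApp w (ofCoeffs c) v + ofCoeffs z v := by
    rw [jApp_ofCoeffs, ← add_apply, ← map_add, add_sub_cancel, ofCoeffs_coeffs]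
  refine ⟨_, _, isSymMultilinear_ofCoeffs hc, isSymMultilinear_ofCoeffs hz,
    contrZero_ofCoeffs hz hcontr, hdec, fun u₂ h₂ hu₂ hh₂ hzero₂ hdec₂ => ?_⟩
  obtain ⟨u₂, rfl⟩ := hu₂.exists_multilinearMap
  obtain ⟨h₂, rfl⟩ := hh₂.exists_multilinearMap
  have hcoeffs : symMul w (coeffs u₂) + coeffs h₂ = symMul w c + z := by
    rw [← coeffs_jApp, ← map_add, add_sub_cancel]
    exact congrArg _ (funext fun v => (hdec₂ v).symm)
  have hJ := apply_eq_of_add_eq_add_of_adjoint hadj (coeffs_mem_symCoeffs hh₂) hz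
    (contract_coeffs_eq_zero h₂ hzero₂) hcontr hcoeffs
  have hj (v) : jApp w u₂ v = jApp w (ofCoeffs c) v := by
    rw [← ofCoeffs_coeffs u₂, jApp_ofCoeffs, jApp_ofCoeffs, hJ]
  exact ⟨hj, funext fun v => by linarith [hdec v, hdec₂ v, hj v]⟩

/-- Orthogonal decomposition `⊗^{m+1}_S E^* = ran(j_ξ) ⊕ ker(ι_{ξ^♯})` (for a nonzero
covector, dual vector `w`): the two summands are orthogonal, and every symmetric
`(m+1)`-tensor `T` decomposes uniquely as `T = j_ξ u + h` with `h ∈ ker ι_{ξ^♯}`. -/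
theorem xray_stmt16 {n m : ℕ} (w : E n) (hw : w ≠ 0) :
    (∀ (u : (Fin m → E n) → ℝ) (h : (Fin (m + 1) → E n) → ℝ),
      IsSymMultilinear u → IsSymMultilinear h → contrZero w h →
      tInner (jApp w u) h = 0) ∧
    (∀ T : (Fin (m + 1) → E n) → ℝ, IsSymMultilinear T →
      ∃ (u : (Fin m → E n) → ℝ) (h : (Fin (m + 1) → E n) → ℝ),
        IsSymMultilinear u ∧ IsSymMultilinear h ∧ contrZero w h ∧
        (∀ v, T v = jApp w u v + h v) ∧
        (∀ (u₂ : (Fin m → E n) → ℝ) (h₂ : (Fin (m + 1) → E n) → ℝ),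
          IsSymMultilinear u₂ → IsSymMultilinear h₂ → contrZero w h₂ →
          (∀ v, T v = jApp w u₂ v + h₂ v) →
          (∀ v, jApp w u₂ v = jApp w u v) ∧ h₂ = h)) :=
  xray_stmt16_general w
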